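/- arXiv:math/9812005 — 4 statements merged into one kernel-verified Lean document; each statement's English description precedes it below -/
import Mathlib

section
/- Let J be a linear complex structure on a real vector space V (i.e. J² = -Id) and let J̇ be a linear endomorphism of V anticommuting with J (J J̇ = -J̇ J), with J̇ small enough that Id + J J̇/2 is invertible. Then the endomorphism exp_J(J̇) := J ∘ (Id - J J̇/2) ∘ (Id + J J̇/2)⁻¹ satisfies (exp_J(J̇))² = -Id, i.e. it is again a complex structure. -/
/-- A perturbed complex structure `exp_J(J̇) = J (1 - JJ̇/2)(1 + JJ̇/2)⁻¹` squares to `-1`. -/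
theorem stmt_0 {V : Type*} [AddCommGroup V] [Module ℝ V] [FiniteDimensional ℝ V]
    (J Jdot : Module.End ℝ V)
    (hJ : J * J = -1)
    (hanti : J * Jdot = -(Jdot * J))
    (hinv : IsUnit (1 + (1/2 : ℝ) • (J * Jdot))) :
    (J * (1 - (1/2 : ℝ) • (J * Jdot)) * Ring.inverse (1 + (1/2 : ℝ) • (J * Jdot))) *
      (J * (1 - (1/2 : ℝ) • (J * Jdot)) * Ring.inverse (1 + (1/2 : ℝ) • (J * Jdot))) = -1 := by
  set A : Module.End ℝ V := (1/2 : ℝ) • (J * Jdot) with hAdef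
  have ha' : Jdot * J = -(J * Jdot) := by rw [hanti, neg_neg]
  have hXJ : J * (J * Jdot) = -Jdot := by rw [← mul_assoc, hJ, neg_one_mul]
  have hJX : (J * Jdot) * J = Jdot := by
    rw [mul_assoc, ha', mul_neg, hXJ, neg_neg]
  have hJA : J * A = -(A * J) := by
    rw [hAdef, mul_smul_comm, smul_mul_assoc, hXJ, hJX, smul_neg]
  have h1 : J * (1 + A) = (1 - A) * J := by
    rw [mul_add, mul_one, sub_mul, one_mul, hJA, sub_eq_add_neg]
  have h2 : (1 + A) * J = J * (1 - A) := by
    rw [add_mul, one_mul, mul_sub, mul_one, hJA, sub_eq_add_neg, neg_neg]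
  have hJu : IsUnit J := ⟨⟨J, -J, by rw [mul_neg, hJ, neg_neg], by rw [neg_mul, hJ, neg_neg]⟩, rfl⟩
  have hu2 : IsUnit (1 - A) := by
    have : (1 - A) = J * (1 + A) * (-J) := by
      rw [h1, mul_assoc, mul_neg, hJ, neg_neg, mul_one]
    rw [this]
    exact (hJu.mul hinv).mul hJu.neg
  have e1 : (1 + A) * (J * Ring.inverse (1 - A)) = J := by
    rw [← mul_assoc, h2, mul_assoc, Ring.mul_inverse_cancel _ hu2, mul_one]
  have key : Ring.inverse (1 + A) * J = J * Ring.inverse (1 - A) := by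
    conv_lhs => rw [← e1]
    rw [← mul_assoc, Ring.inverse_mul_cancel _ hinv, one_mul]
  calc (J * (1 - A) * Ring.inverse (1 + A)) * (J * (1 - A) * Ring.inverse (1 + A))
      = J * (1 - A) * (Ring.inverse (1 + A) * J) * ((1 - A) * Ring.inverse (1 + A)) := by
        simp only [mul_assoc]
    _ = J * (1 - A) * (J * Ring.inverse (1 - A)) * ((1 - A) * Ring.inverse (1 + A)) := by
        rw [key]
    _ = J * ((1 - A) * J) * (Ring.inverse (1 - A) * (1 - A)) * Ring.inverse (1 + A) := by
        simp only [mul_assoc]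
    _ = J * (J * (1 + A)) * 1 * Ring.inverse (1 + A) := by
        rw [← h1, Ring.inverse_mul_cancel _ hu2]
    _ = (J * J) * ((1 + A) * Ring.inverse (1 + A)) := by
        rw [mul_one]; simp only [mul_assoc]
    _ = -1 := by rw [hJ, Ring.mul_inverse_cancel _ hinv, mul_one]
end

section
/- Let X, Y, Z be real Banach spaces (local models of Banach manifolds), let f : Y → X and g : Z → X be continuously differentiable maps with f(y₀) = g(z₀) = x₀. Suppose the map df_{y₀} ⊕ (-dg_{z₀}) : Y × Z → X is surjective and its kernel K admits a closed complement Q. Then there exists a neighborhood of (y₀, z₀) in which the fibered product {(y,z) : f(y) = g(z)} is a C¹ Banach submanifold with tangent space at (y₀, z₀) equal to K. -/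
/-!
Write `h (y, z) = f y - g z`, so that the fibered product is the zero set of `h` and `D` is the
derivative of `h` at `(y₀, z₀)`. Transversality makes `D` surjective with complemented kernel `K`,
so the implicit function theorem gives a local diffeomorphism `ψ = (h, projection onto K)` of
`Y × Z` onto an open subset of `X × K`. It straightens the zero set of `h` into the slice `{0} × K`,
and `k ↦ ψ⁻¹ (0, k)` is the required chart.
-/

open Set

namespace OpenPartialHomeomorph

variable {E F G : Type*} [TopologicalSpace E] [TopologicalSpace F] [TopologicalSpace G]

theorem image_symm_slice_eq (e : OpenPartialHomeomorph E (F × G)) (c : F) {W : Set G}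
    (hW : {c} ×ˢ W ⊆ e.target) :
    (fun k => e.symm (c, k)) '' W = e.source ∩ e ⁻¹' ({c} ×ˢ W) := by
  rw [← e.symm_image_eq_source_inter_preimage hW, singleton_prod, image_image]

theorem injOn_symm_slice (e : OpenPartialHomeomorph E (F × G)) (c : F) {W : Set G}
    (hW : {c} ×ˢ W ⊆ e.target) : InjOn (fun k => e.symm (c, k)) W :=
  fun _ hk₁ _ hk₂ hk =>
    (Prod.ext_iff.1 (e.symm.injOn (hW (mk_mem_prod rfl hk₁)) (hW (mk_mem_prod rfl hk₂)) hk)).2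

end OpenPartialHomeomorph

namespace HasStrictFDerivAt

variable {𝕜 E F : Type*} [RCLike 𝕜] [NormedAddCommGroup E] [NormedSpace 𝕜 E] [CompleteSpace E]
  [NormedAddCommGroup F] [NormedSpace 𝕜 F] [CompleteSpace F] {h : E → F} {D : E →L[𝕜] F} {a : E}

theorem contDiffAt_implicitFunctionOfComplemented (hh : HasStrictFDerivAt h D a)
    (hD : D.range = ⊤) (hker : D.ker.ClosedComplemented) {n : WithTop ℕ∞} (hC : ContDiffAt 𝕜 n h a)
    (hn : n ≠ 0) : ContDiffAt 𝕜 n (hh.implicitFunctionOfComplemented h D hD hker (h a)) 0 := by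
  set φ := implicitFunctionDataOfComplemented h D hh hD hker
  have hright : ContDiffAt 𝕜 n φ.rightFun φ.pt :=
    ((Classical.choose hker).contDiff.comp (contDiff_id.sub contDiff_const)).contDiffAt
  have hφ := φ.contDiffAt_implicitFunction hC hright hn
  simp only [φ, ImplicitFunctionData.prodFun, implicitFunctionDataOfComplemented, sub_self,
    map_zero] at hφ
  exact hφ.comp 0 (contDiffAt_const.prodMk contDiffAt_id)

/-- The order `n` is finite: `ContDiffAt 𝕜 ∞` only gives `C^m` on neighbourhoods that may
shrink as `m` grows. -/
theorem exists_implicitFunctionOfComplemented_image_eq_levelSet (hh : HasStrictFDerivAt h D a)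
    (hD : D.range = ⊤) (hker : D.ker.ClosedComplemented) {n : ℕ} (hC : ContDiffAt 𝕜 n h a)
    (hn : n ≠ 0) :
    ∃ U : Set E, IsOpen U ∧ a ∈ U ∧ ∃ W : Set D.ker, IsOpen W ∧ 0 ∈ W ∧
      ContDiffOn 𝕜 n (hh.implicitFunctionOfComplemented h D hD hker (h a)) W ∧
      InjOn (hh.implicitFunctionOfComplemented h D hD hker (h a)) W ∧
      hh.implicitFunctionOfComplemented h D hD hker (h a) '' W = {p | p ∈ U ∧ h p = h a} := by
  set e := hh.implicitToOpenPartialHomeomorphOfComplemented h D hD hker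
  obtain ⟨u, hu, hφu⟩ := (hh.contDiffAt_implicitFunctionOfComplemented hD hker hC
    (by exact_mod_cast hn)).contDiffOn le_rfl (by simp)
  set W := interior u ∩ {k | (h a, k) ∈ e.target}
  have hW : IsOpen W :=
    isOpen_interior.inter (e.open_target.preimage (continuous_const.prodMk continuous_id))
  have hW0 : 0 ∈ W := ⟨mem_interior_iff_mem_nhds.2 hu,
    hh.mem_implicitToOpenPartialHomeomorphOfComplemented_target hD hker⟩
  have hWe : {h a} ×ˢ W ⊆ e.target := by
    rintro ⟨_, k⟩ ⟨rfl, hk⟩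
    exact hk.2
  have haU : a ∈ e.source ∩ e ⁻¹' (univ ×ˢ W) :=
    ⟨hh.mem_implicitToOpenPartialHomeomorphOfComplemented_source hD hker, by simpa [e] using hW0⟩
  refine ⟨_, e.isOpen_inter_preimage (isOpen_univ.prod hW), haU, W, hW, hW0,
    hφu.mono (inter_subset_left.trans interior_subset), e.injOn_symm_slice _ hWe, ?_⟩
  rw [show hh.implicitFunctionOfComplemented h D hD hker (h a) = fun k => e.symm (h a, k) from rfl,
    e.image_symm_slice_eq _ hWe]
  ext p
  simp only [mem_inter_iff, mem_preimage, mem_prod, mem_univ, mem_singleton_iff, mem_ofPred_eq,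
    e, implicitToOpenPartialHomeomorphOfComplemented_fst]
  tauto

end HasStrictFDerivAt

/-- Transversal fibered product of Banach manifolds is locally a `C¹` submanifold,
parametrized by a chart `φ` defined on the kernel `K` of `df ⊕ (-dg)`, whose derivative
at the base point is the inclusion of `K` (so the tangent space is `K`). -/
theorem stmt_2 {X Y Z : Type*} [NormedAddCommGroup X] [NormedSpace ℝ X] [CompleteSpace X]
    [NormedAddCommGroup Y] [NormedSpace ℝ Y] [CompleteSpace Y]
    [NormedAddCommGroup Z] [NormedSpace ℝ Z] [CompleteSpace Z]
    (f : Y → X) (g : Z → X) (hf : ContDiff ℝ 1 f) (hg : ContDiff ℝ 1 g)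
    (y₀ : Y) (z₀ : Z) (hpt : f y₀ = g z₀)
    (D : (Y × Z) →L[ℝ] X)
    (hD : D = (fderiv ℝ f y₀).comp (ContinuousLinearMap.fst ℝ Y Z)
        - (fderiv ℝ g z₀).comp (ContinuousLinearMap.snd ℝ Y Z))
    (hsurj : Function.Surjective ⇑D)
    (hcompl : ∃ Q : Submodule ℝ (Y × Z), IsClosed (Q : Set (Y × Z)) ∧
        IsCompl (LinearMap.ker (D : (Y × Z) →ₗ[ℝ] X)) Q) :
    ∃ U : Set (Y × Z), IsOpen U ∧ (y₀, z₀) ∈ U ∧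
      ∃ W : Set (LinearMap.ker (D : (Y × Z) →ₗ[ℝ] X)), IsOpen W ∧ (0 : LinearMap.ker (D : (Y × Z) →ₗ[ℝ] X)) ∈ W ∧
        ∃ φ : (LinearMap.ker (D : (Y × Z) →ₗ[ℝ] X)) → Y × Z,
          ContDiffOn ℝ 1 φ W ∧ φ 0 = (y₀, z₀) ∧
          HasFDerivAt φ ((LinearMap.ker (D : (Y × Z) →ₗ[ℝ] X)).subtypeL) 0 ∧
          Set.InjOn φ W ∧
          φ '' W = {p : Y × Z | p ∈ U ∧ f p.1 = g p.2} := by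
  obtain ⟨Q, hQ, hKQ⟩ := hcompl
  set h : Y × Z → X := fun p => f p.1 - g p.2
  have hC : ContDiff ℝ 1 h := (hf.comp contDiff_fst).sub (hg.comp contDiff_snd)
  have hDh : HasFDerivAt h D (y₀, z₀) := hD ▸
    (((hf.differentiable one_ne_zero y₀).hasFDerivAt.comp _ hasFDerivAt_fst).sub
      ((hg.differentiable one_ne_zero z₀).hasFDerivAt.comp _ hasFDerivAt_snd))
  have hh := hC.contDiffAt.hasStrictFDerivAt' hDh one_ne_zero
  have hr := LinearMap.range_eq_top.2 hsurj
  have hker := Submodule.ClosedComplemented.of_isCompl_isClosed hKQ D.isClosed_ker hQ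
  obtain ⟨U, hU, haU, W, hW, hW0, hφC, hφinj, hφW⟩ :=
    hh.exists_implicitFunctionOfComplemented_image_eq_levelSet hr hker (n := 1) hC.contDiffAt
      one_ne_zero
  have h0 : h (y₀, z₀) = 0 := sub_eq_zero.2 hpt
  refine ⟨U, hU, haU, W, hW, hW0, _, hφC, hh.implicitFunctionOfComplemented_apply_image hr hker,
    (hh.to_implicitFunctionOfComplemented hr hker).hasFDerivAt, hφinj, ?_⟩
  rw [hφW, h0]
  simp only [h, sub_eq_zero]
end

section
/- Let f : Y → X and g : Z → X be C¹ maps of Banach manifolds. Then the set of transversal points of the fibered product Y ×_X Z is open in Y ×_X Z. -/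
/-!
A point is transversal exactly when `D = df ∘ fst - dg ∘ snd` has a continuous right inverse:
given a closed complement `Q` of `ker D`, the open mapping theorem identifies the domain with
`X × ker D` through `(D, projection onto ker D along Q)`. Having a right inverse `S` is an open
condition, because `T ∘ S` stays invertible for `T` near `D`, and then `S ∘ (T ∘ S)⁻¹` is a right
inverse of `T`. For `C¹` maps `D` depends continuously on the point, so the transversal points
form the preimage of an open set.
-/

open Function

namespace ContinuousLinearMap

variable {𝕜 E F : Type*} [NontriviallyNormedField 𝕜]
  [NormedAddCommGroup E] [NormedSpace 𝕜 E] [NormedAddCommGroup F] [NormedSpace 𝕜 F]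

theorem hasRightInverse_iff_surjective_and_exists_isClosed_isCompl_ker
    [CompleteSpace E] [CompleteSpace F] (T : E →L[𝕜] F) :
    T.HasRightInverse ↔ Surjective T ∧ ∃ Q : Submodule 𝕜 E, IsClosed (Q : Set E) ∧
      IsCompl (LinearMap.ker (T : E →ₗ[𝕜] F)) Q := by
  refine ⟨fun ⟨S, hS⟩ ↦ ⟨hS.surjective,
    (T.closedComplemented_ker_of_rightInverse S hS).exists_isClosed_isCompl⟩, ?_⟩
  rintro ⟨hsurj, Q, hQ, hcompl⟩
  have htop := Submodule.IsCompl.isTopCompl_of_isClosed hcompl T.isClosed_ker hQ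
  let e := equivProdOfSurjectiveOfIsCompl T (Submodule.projectionOntoL _ _ htop)
    (LinearMap.range_eq_top.mpr hsurj) (Submodule.range_projectionOntoL htop)
    (by rwa [Submodule.ker_projectionOntoL])
  exact ⟨(e.symm : F × (T : E →ₗ[𝕜] F).ker →L[𝕜] E).comp (inl 𝕜 F _),
    fun y ↦ congrArg Prod.fst (e.apply_symm_apply (y, 0))⟩

theorem isOpen_setOf_hasRightInverse [CompleteSpace F] :
    IsOpen {T : E →L[𝕜] F | T.HasRightInverse} := by
  refine isOpen_iff_mem_nhds.mpr fun T₀ ⟨S, hS⟩ ↦ ?_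
  have hcont : Continuous fun T : E →L[𝕜] F ↦ T.comp S := (compL 𝕜 F E F).flip S |>.continuous
  have hunit : IsUnit (T₀.comp S) := by
    convert isUnit_one (M := F →L[𝕜] F)
    ext y; exact hS y
  filter_upwards [hcont.continuousAt.preimage_mem_nhds (Units.isOpen.mem_nhds hunit)]
  rintro T ⟨u, hu⟩
  refine ⟨S.comp (↑u⁻¹ : F →L[𝕜] F), fun y ↦ ?_⟩
  simpa [hu] using congr($u.mul_inv y)

end ContinuousLinearMap

open ContinuousLinearMap in
theorem continuous_fderiv_comp_fst_sub_fderiv_comp_snd {𝕜 X Y Z : Type*}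
    [NontriviallyNormedField 𝕜] [NormedAddCommGroup X] [NormedSpace 𝕜 X]
    [NormedAddCommGroup Y] [NormedSpace 𝕜 Y]
    [NormedAddCommGroup Z] [NormedSpace 𝕜 Z] {f : Y → X} {g : Z → X}
    (hf : ContDiff 𝕜 1 f) (hg : ContDiff 𝕜 1 g) :
    Continuous fun q : Y × Z ↦
      (fderiv 𝕜 f q.1).comp (fst 𝕜 Y Z) - (fderiv 𝕜 g q.2).comp (snd 𝕜 Y Z) := by
  have := hf.continuous_fderiv one_ne_zero
  have := hg.continuous_fderiv one_ne_zero
  fun_prop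

/-- The set of transversal points is open in the fibered product `Y ×_X Z`. -/
theorem stmt_3 {X Y Z : Type*} [NormedAddCommGroup X] [NormedSpace ℝ X] [CompleteSpace X]
    [NormedAddCommGroup Y] [NormedSpace ℝ Y] [CompleteSpace Y]
    [NormedAddCommGroup Z] [NormedSpace ℝ Z] [CompleteSpace Z]
    (f : Y → X) (g : Z → X) (hf : ContDiff ℝ 1 f) (hg : ContDiff ℝ 1 g) :
    IsOpen {p : {q : Y × Z // f q.1 = g q.2} |
      Function.Surjective
        ⇑((fderiv ℝ f (p : Y × Z).1).comp (ContinuousLinearMap.fst ℝ Y Z)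
          - (fderiv ℝ g (p : Y × Z).2).comp (ContinuousLinearMap.snd ℝ Y Z)) ∧
      ∃ Q : Submodule ℝ (Y × Z), IsClosed (Q : Set (Y × Z)) ∧
        IsCompl (LinearMap.ker
          (((fderiv ℝ f (p : Y × Z).1).comp (ContinuousLinearMap.fst ℝ Y Z)
            - (fderiv ℝ g (p : Y × Z).2).comp (ContinuousLinearMap.snd ℝ Y Z)) : Y × Z →ₗ[ℝ] X)) Q} := by
  convert ContinuousLinearMap.isOpen_setOf_hasRightInverse.preimage
    ((continuous_fderiv_comp_fst_sub_fderiv_comp_snd hf hg).comp continuous_subtype_val) using 1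
  ext p
  exact (ContinuousLinearMap.hasRightInverse_iff_surjective_and_exists_isClosed_isCompl_ker _).symm
end

section
/- Let γ : [0,1] → ℂ be continuous. If the standard annuli A_{r_n,1} = {r_n < |z| < 1} and A_{s_n,1} are biholomorphic then r_n = s_n; that is, two standard annuli A_{r,1} and A_{s,1} with 0 < r, s < 1 are biholomorphic if and only if r = s. -/
/-!
A biholomorphism `f` from `A_{r,1}` onto `A_{s,1}` is proper, and thin rings at a boundary
circle are connected, so `|f|` tends to `s` or to `1` along each boundary circle of `A_{r,1}`.
Equal limits contradict the maximum principle, and after composing with the inversion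
`w ↦ s / w` we may assume `|f| → s` as `|z| → r` and `|f| → 1` as `|z| → 1`. The maximum
principle for `f ^ p / z ^ q` and `z ^ q / f ^ p` (as in Hadamard's three circles theorem) then
gives `|f z| = |z| ^ α` with `r ^ α = s`. So `f (exp u) * exp (-α u)` has modulus one on the
convex strip `exp ⁻¹' A_{r,1}`, hence is constant: `f (exp u) = c exp (α u)`. This is
`2πi`-periodic only if `α ∈ ℤ`, and injectivity of `f` forces `1 / α ∈ ℤ`, so `α = 1` and `r = s`.
-/

open Set Filter Topology

def annulus (a b : ℝ) : Set ℂ := {z | a < ‖z‖ ∧ ‖z‖ < b}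

theorem isPreconnected_norm_preimage {t : Set ℝ} (ht : t.OrdConnected) :
    IsPreconnected ((‖·‖ : ℂ → ℝ) ⁻¹' t) := by
  have hpolar : (‖·‖ : ℂ → ℝ) ⁻¹' t =
      (fun p : ℝ × ℝ => (p.1 : ℂ) * Complex.exp (p.2 * Complex.I)) '' ((t ∩ Ici 0) ×ˢ univ) := by
    ext z
    constructor
    · intro hz
      exact ⟨(‖z‖, z.arg), ⟨⟨hz, norm_nonneg z⟩, trivial⟩, Complex.norm_mul_exp_arg_mul_I z⟩
    · rintro ⟨⟨ρ, θ⟩, ⟨⟨hρ, hρ0⟩, -⟩, rfl⟩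
      simpa [Complex.norm_exp_ofReal_mul_I, abs_of_nonneg (mem_Ici.1 hρ0)] using hρ
  rw [hpolar]
  exact ((ht.inter ordConnected_Ici).isPreconnected.prod isPreconnected_univ).image _
    (by fun_prop : Continuous _).continuousOn

theorem exists_isPreconnected_mem_comap_norm {ι : Sort*} {l : Filter ℝ} {p : ι → Prop}
    {s : ι → Set ℝ} (hl : l.HasBasis p s) (hs : ∀ i, p i → (s i).OrdConnected) {S : Set ℂ}
    (hS : S ∈ comap (‖·‖) l) : ∃ T ∈ comap (‖·‖) l, T ⊆ S ∧ IsPreconnected T := by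
  obtain ⟨i, hi, hiS⟩ := (hl.comap _).mem_iff.1 hS
  exact ⟨_, (hl.comap _).mem_of_mem hi, hiS, isPreconnected_norm_preimage (hs i hi)⟩

section Dichotomy

variable {X Y : Type*} [TopologicalSpace Y] {φ : X → Y} {l : Filter X} {y₁ y₂ : Y}

theorem tendsto_nhds_of_tendsto_nhds_sup {V : Set Y} (h : Tendsto φ l (𝓝 y₁ ⊔ 𝓝 y₂))
    (hV : V ∈ 𝓝 y₂) (hφV : ∀ᶠ x in l, φ x ∉ V) : Tendsto φ l (𝓝 y₁) := fun W hW => mem_map.2 <| by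
  filter_upwards [h (union_mem_sup hW hV), hφV] with x hx hxV
  exact hx.resolve_right hxV

theorem tendsto_nhds_or_of_tendsto_nhds_sup [TopologicalSpace X] [T2Space Y]
    (hl : ∀ S ∈ l, ∃ T ∈ l, T ⊆ S ∧ IsPreconnected T) (hφ : ∃ S ∈ l, ContinuousOn φ S)
    (h : Tendsto φ l (𝓝 y₁ ⊔ 𝓝 y₂)) : Tendsto φ l (𝓝 y₁) ∨ Tendsto φ l (𝓝 y₂) := by
  rcases eq_or_ne y₁ y₂ with rfl | hne
  · exact Or.inl (by simpa using h)
  obtain ⟨U, V, hU, hV, hyU, hyV, hUV⟩ := t2_separation hne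
  obtain ⟨S, hS, hφS⟩ := hφ
  obtain ⟨T, hT, hTsub, hTconn⟩ :=
    hl _ (inter_mem hS (h (union_mem_sup (hU.mem_nhds hyU) (hV.mem_nhds hyV))))
  have hTimage : φ '' T ⊆ U ∪ V := image_subset_iff.2 fun x hx => (hTsub hx).2
  rcases (hTconn.image φ (hφS.mono fun x hx => (hTsub hx).1)).subset_or_subset hU hV hUV
    hTimage with hTU | hTV
  · refine Or.inl (tendsto_nhds_of_tendsto_nhds_sup h (hV.mem_nhds hyV) ?_)
    filter_upwards [hT] with x hx
    exact disjoint_left.1 hUV (hTU ⟨x, hx, rfl⟩)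
  · refine Or.inr (tendsto_nhds_of_tendsto_nhds_sup (sup_comm (𝓝 y₁) _ ▸ h) (hU.mem_nhds hyU) ?_)
    filter_upwards [hT] with x hx
    exact disjoint_right.1 hUV (hTV ⟨x, hx, rfl⟩)

end Dichotomy

section Annulus

variable {a b c d : ℝ}

theorem annulus_mem_comap_norm_nhdsGT (h : a < b) : annulus a b ∈ comap (‖·‖) (𝓝[>] a) :=
  preimage_mem_comap (Ioo_mem_nhdsGT h)

theorem annulus_mem_comap_norm_nhdsLT (h : a < b) : annulus a b ∈ comap (‖·‖) (𝓝[<] b) :=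
  preimage_mem_comap (Ioo_mem_nhdsLT h)

theorem ofReal_midpoint_mem_annulus (ha : 0 ≤ a) (hab : a < b) :
    (((a + b) / 2 : ℝ) : ℂ) ∈ annulus a b := by
  have h : ‖(((a + b) / 2 : ℝ) : ℂ)‖ = (a + b) / 2 := by
    rw [Complex.norm_real, Real.norm_of_nonneg (by linarith)]
  exact ⟨by rw [h]; linarith, by rw [h]; linarith⟩

theorem compl_mem_comap_norm_of_isCompact {K : Set ℂ} (hK : IsCompact K)
    (hKA : K ⊆ annulus a b) : Kᶜ ∈ comap (‖·‖) (𝓝[>] a ⊔ 𝓝[<] b) := by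
  have hclosed : IsClosed ((‖·‖) '' K) := (hK.image continuous_norm).isClosed
  have hmem : ∀ x, (∀ z ∈ K, ‖z‖ ≠ x) → ((‖·‖) '' K)ᶜ ∈ 𝓝 x := fun x hx =>
    hclosed.isOpen_compl.mem_nhds fun ⟨z, hz, hzx⟩ => hx z hz hzx
  refine mem_comap.2 ⟨((‖·‖) '' K)ᶜ, mem_sup.2 ⟨?_, ?_⟩, fun z hz hzK => hz ⟨z, hzK, rfl⟩⟩
  · exact mem_nhdsWithin_of_mem_nhds (hmem a fun z hz => (hKA hz).1.ne')
  · exact mem_nhdsWithin_of_mem_nhds (hmem b fun z hz => (hKA hz).2.ne)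

theorem tendsto_norm_of_leftInvOn {f g : ℂ → ℂ} (hab : a < b) (hg : ContinuousOn g (annulus c d))
    (hf : MapsTo f (annulus a b) (annulus c d)) (hg' : MapsTo g (annulus c d) (annulus a b))
    (hgf : LeftInvOn g f (annulus a b)) :
    Tendsto (‖f ·‖) (comap (‖·‖) (𝓝[>] a ⊔ 𝓝[<] b)) (𝓝 c ⊔ 𝓝 d) := fun W hW => mem_map.2 <| by
  obtain ⟨hWc, hWd⟩ := mem_sup.1 hW
  set K : Set ℂ := (‖·‖) ⁻¹' (Icc c d \ interior W)
  have hKA : K ⊆ annulus c d := fun z ⟨⟨hcz, hzd⟩, hzW⟩ =>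
    ⟨hcz.lt_of_ne fun h => hzW (h ▸ mem_interior_iff_mem_nhds.2 hWc),
      hzd.lt_of_ne fun h => hzW (h ▸ mem_interior_iff_mem_nhds.2 hWd)⟩
  have hK : IsCompact K := by
    refine Metric.isCompact_of_isClosed_isBounded
      ((isClosed_Icc.sdiff isOpen_interior).preimage continuous_norm) ?_
    exact (Metric.isBounded_closedBall (x := 0) (r := d)).subset fun z hz =>
      mem_closedBall_zero_iff.2 hz.1.2
  have hgK : IsCompact (g '' K) := hK.image_of_continuousOn (hg.mono hKA)
  filter_upwards [compl_mem_comap_norm_of_isCompact hgK (hg'.mono_left hKA).image_subset,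
    preimage_mem_comap (mem_sup.2 ⟨Ioo_mem_nhdsGT hab, Ioo_mem_nhdsLT hab⟩)]
    with z hzK hz
  by_contra hzW
  refine hzK ⟨f z, ⟨⟨(hf hz).1.le, (hf hz).2.le⟩, fun h => hzW ?_⟩, hgf hz⟩
  exact (interior_subset h : ‖f z‖ ∈ W)

theorem tendsto_norm_inner_or_outer {f : ℂ → ℂ} (hab : a < b) (hf : ContinuousOn f (annulus a b))
    (h : Tendsto (‖f ·‖) (comap (‖·‖) (𝓝[>] a ⊔ 𝓝[<] b)) (𝓝 c ⊔ 𝓝 d)) :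
    (Tendsto (‖f ·‖) (comap (‖·‖) (𝓝[>] a)) (𝓝 c) ∨
        Tendsto (‖f ·‖) (comap (‖·‖) (𝓝[>] a)) (𝓝 d)) ∧
      (Tendsto (‖f ·‖) (comap (‖·‖) (𝓝[<] b)) (𝓝 c) ∨
        Tendsto (‖f ·‖) (comap (‖·‖) (𝓝[<] b)) (𝓝 d)) := by
  rw [comap_sup, tendsto_sup] at h
  have hnf := continuous_norm.comp_continuousOn hf
  exact ⟨tendsto_nhds_or_of_tendsto_nhds_sup
      (fun _ => exists_isPreconnected_mem_comap_norm (nhdsGT_basis a) fun _ _ => ordConnected_Ioo)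
      ⟨_, annulus_mem_comap_norm_nhdsGT hab, hnf⟩ h.1,
    tendsto_nhds_or_of_tendsto_nhds_sup
      (fun _ => exists_isPreconnected_mem_comap_norm (nhdsLT_basis b) fun _ _ => ordConnected_Ioo)
      ⟨_, annulus_mem_comap_norm_nhdsLT hab, hnf⟩ h.2⟩

theorem norm_le_max_of_tendsto {G : ℂ → ℂ} (hG : DifferentiableOn ℂ G (annulus a b))
    (hin : Tendsto (‖G ·‖) (comap (‖·‖) (𝓝[>] a)) (𝓝 c))
    (hout : Tendsto (‖G ·‖) (comap (‖·‖) (𝓝[<] b)) (𝓝 d)) {z : ℂ} (hz : z ∈ annulus a b) :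
    ‖G z‖ ≤ max c d := by
  refine le_of_forall_gt_imp_ge_of_dense fun C hC => ?_
  obtain ⟨ρ₁, ⟨hρ₁a, hρ₁z⟩, h₁⟩ : ∃ ρ ∈ Ioo a ‖z‖, ∀ w : ℂ, ‖w‖ = ρ → ‖G w‖ ≤ C :=
    ((eventually_comap.1 (hin.eventually (ge_mem_nhds ((le_max_left c d).trans_lt hC)))).and
      (Ioo_mem_nhdsGT hz.1)).exists.imp fun _ hρ => ⟨hρ.2, hρ.1⟩
  obtain ⟨ρ₂, ⟨hzρ₂, hρ₂b⟩, h₂⟩ : ∃ ρ ∈ Ioo ‖z‖ b, ∀ w : ℂ, ‖w‖ = ρ → ‖G w‖ ≤ C :=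
    ((eventually_comap.1 (hout.eventually (ge_mem_nhds ((le_max_right c d).trans_lt hC)))).and
      (Ioo_mem_nhdsLT hz.2)).exists.imp fun _ hρ => ⟨hρ.2, hρ.1⟩
  have hsub : closure (annulus ρ₁ ρ₂) ⊆ annulus a b := by
    refine (continuous_norm.closure_preimage_subset (Ioo ρ₁ ρ₂)).trans fun w hw => ?_
    rw [mem_preimage, closure_Ioo (hρ₁z.trans hzρ₂).ne] at hw
    exact ⟨hρ₁a.trans_le hw.1, hw.2.trans_lt hρ₂b⟩
  refine Complex.norm_le_of_forall_mem_frontier_norm_le ?_ (hG.mono hsub).diffContOnCl ?_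
    (subset_closure ⟨hρ₁z, hzρ₂⟩)
  · exact (Metric.isBounded_ball (x := 0) (r := ρ₂)).subset fun w hw => mem_ball_zero_iff.2 hw.2
  · intro w hw
    replace hw := continuous_norm.frontier_preimage_subset (Ioo ρ₁ ρ₂) hw
    rw [mem_preimage, frontier_Ioo (hρ₁z.trans hzρ₂)] at hw
    rcases hw with hw | hw
    exacts [h₁ w hw, h₂ w hw]

end Annulus

theorem le_rpow_of_forall_pow_le_pow_floor {x y α : ℝ} (hx : 0 < x) (hy : 0 < y) (hα : 0 ≤ α)
    (h : ∀ n : ℕ, y ^ n ≤ x ^ ⌊α * n⌋₊) : y ≤ x ^ α := by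
  rw [Real.rpow_def_of_pos hx, ← Real.log_le_iff_le_exp hy, mul_comm]
  have hlim : Tendsto (fun n : ℕ => (⌊α * n⌋₊ : ℝ) / n * Real.log x) atTop
      (𝓝 (α * Real.log x)) :=
    ((tendsto_nat_floor_mul_div_atTop hα).comp tendsto_natCast_atTop_atTop).mul_const _
  refine ge_of_tendsto hlim (eventually_atTop.2 ⟨1, fun n hn => ?_⟩)
  rw [div_mul_eq_mul_div, le_div_iff₀ (by exact_mod_cast hn), mul_comm, ← Real.log_pow,
    ← Real.log_pow]
  exact Real.log_le_log (pow_pos hy n) (h n)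

theorem rpow_le_of_forall_pow_ceil_le_pow {x y α : ℝ} (hx : 0 < x) (hy : 0 < y) (hα : 0 ≤ α)
    (h : ∀ n : ℕ, x ^ ⌈α * n⌉₊ ≤ y ^ n) : x ^ α ≤ y := by
  rw [Real.rpow_def_of_pos hx, ← Real.le_log_iff_exp_le hy, mul_comm]
  have hlim : Tendsto (fun n : ℕ => (⌈α * n⌉₊ : ℝ) / n * Real.log x) atTop
      (𝓝 (α * Real.log x)) :=
    ((tendsto_nat_ceil_mul_div_atTop hα).comp tendsto_natCast_atTop_atTop).mul_const _
  refine le_of_tendsto hlim (eventually_atTop.2 ⟨1, fun n hn => ?_⟩)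
  rw [div_mul_eq_mul_div, div_le_iff₀ (by exact_mod_cast hn), mul_comm (Real.log y),
    ← Real.log_pow, ← Real.log_pow]
  exact Real.log_le_log (pow_pos hx _) (h n)

section Modulus

variable {f : ℂ → ℂ} {r s : ℝ}

theorem tendsto_norm_comap_nhdsWithin (x : ℝ) (t : Set ℝ) :
    Tendsto (‖·‖ : ℂ → ℝ) (comap (‖·‖) (𝓝[t] x)) (𝓝 x) :=
  tendsto_comap.mono_right nhdsWithin_le_nhds

theorem norm_pow_le_pow_of_tendsto (hr : 0 < r) (hf : DifferentiableOn ℂ f (annulus r 1))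
    (hin : Tendsto (‖f ·‖) (comap (‖·‖) (𝓝[>] r)) (𝓝 s))
    (hout : Tendsto (‖f ·‖) (comap (‖·‖) (𝓝[<] 1)) (𝓝 1)) {p q : ℕ} (hpq : s ^ p ≤ r ^ q)
    {z : ℂ} (hz : z ∈ annulus r 1) : ‖f z‖ ^ p ≤ ‖z‖ ^ q := by
  have hnorm (w : ℂ) : ‖f w ^ p / w ^ q‖ = ‖f w‖ ^ p / ‖w‖ ^ q := by
    rw [norm_div, norm_pow, norm_pow]
  have hG : DifferentiableOn ℂ (fun w => f w ^ p / w ^ q) (annulus r 1) :=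
    (hf.pow p).div (differentiableOn_id.pow q) fun w hw =>
      pow_ne_zero q (norm_pos_iff.1 (hr.trans hw.1))
  have hGin := (hin.pow p).div ((tendsto_norm_comap_nhdsWithin r _).pow q) (pow_ne_zero q hr.ne')
  have hGout := (hout.pow p).div ((tendsto_norm_comap_nhdsWithin 1 _).pow q) (by simp)
  simp only [one_pow, div_one] at hGout
  have key := norm_le_max_of_tendsto hG (by simp only [hnorm]; exact hGin)
    (by simp only [hnorm]; exact hGout) hz
  rwa [hnorm, max_eq_right ((div_le_one (pow_pos hr q)).2 hpq),
    div_le_one (pow_pos (hr.trans hz.1) q)] at key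

theorem pow_le_norm_pow_of_tendsto (hs : 0 < s) (hf : DifferentiableOn ℂ f (annulus r 1))
    (hf0 : ∀ z ∈ annulus r 1, f z ≠ 0)
    (hin : Tendsto (‖f ·‖) (comap (‖·‖) (𝓝[>] r)) (𝓝 s))
    (hout : Tendsto (‖f ·‖) (comap (‖·‖) (𝓝[<] 1)) (𝓝 1)) {p q : ℕ} (hpq : r ^ q ≤ s ^ p)
    {z : ℂ} (hz : z ∈ annulus r 1) : ‖z‖ ^ q ≤ ‖f z‖ ^ p := by
  have hnorm (w : ℂ) : ‖w ^ q / f w ^ p‖ = ‖w‖ ^ q / ‖f w‖ ^ p := by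
    rw [norm_div, norm_pow, norm_pow]
  have hG : DifferentiableOn ℂ (fun w => w ^ q / f w ^ p) (annulus r 1) :=
    (differentiableOn_id.pow q).div (hf.pow p) fun w hw => pow_ne_zero p (hf0 w hw)
  have hGin := ((tendsto_norm_comap_nhdsWithin r _).pow q).div (hin.pow p) (pow_ne_zero p hs.ne')
  have hGout := ((tendsto_norm_comap_nhdsWithin 1 _).pow q).div (hout.pow p) (by simp)
  simp only [one_pow, div_one] at hGout
  have key := norm_le_max_of_tendsto hG (by simp only [hnorm]; exact hGin)
    (by simp only [hnorm]; exact hGout) hz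
  rwa [hnorm, max_eq_right ((div_le_one (pow_pos hs p)).2 hpq),
    div_le_one (pow_pos (norm_pos_iff.2 (hf0 z hz)) p)] at key

theorem norm_eq_rpow_of_tendsto (hr0 : 0 < r) (hr1 : r < 1) (hs : 0 < s)
    (hf : DifferentiableOn ℂ f (annulus r 1)) (hmf : MapsTo f (annulus r 1) (annulus s 1))
    (hin : Tendsto (‖f ·‖) (comap (‖·‖) (𝓝[>] r)) (𝓝 s))
    (hout : Tendsto (‖f ·‖) (comap (‖·‖) (𝓝[<] 1)) (𝓝 1)) {α : ℝ} (hα : r ^ α = s)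
    (hα0 : 0 ≤ α) {z : ℂ} (hz : z ∈ annulus r 1) : ‖f z‖ = ‖z‖ ^ α := by
  have hspow (n : ℕ) : s ^ n = r ^ (α * n) := by
    rw [← hα, ← Real.rpow_natCast, ← Real.rpow_mul hr0.le]
  have hf0 : ∀ w ∈ annulus r 1, f w ≠ 0 := fun w hw =>
    norm_pos_iff.1 (hs.trans (hmf hw).1)
  refine le_antisymm
    (le_rpow_of_forall_pow_le_pow_floor (hr0.trans hz.1) (hs.trans (hmf hz).1) hα0 fun n =>
      norm_pow_le_pow_of_tendsto hr0 hf hin hout ?_ hz)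
    (rpow_le_of_forall_pow_ceil_le_pow (hr0.trans hz.1) (hs.trans (hmf hz).1) hα0 fun n =>
      pow_le_norm_pow_of_tendsto hs hf hf0 hin hout ?_ hz)
  · rw [hspow, ← Real.rpow_natCast]
    exact Real.rpow_le_rpow_of_exponent_ge hr0 hr1.le (Nat.floor_le (by positivity))
  · rw [hspow, ← Real.rpow_natCast]
    exact Real.rpow_le_rpow_of_exponent_ge hr0 hr1.le (Nat.le_ceil _)

end Modulus

theorem Complex.exp_ofReal_mul_I_eq_one_iff {x : ℝ} :
    Complex.exp (x * Complex.I) = 1 ↔ ∃ n : ℤ, x = n * (2 * Real.pi) := by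
  rw [Complex.exp_eq_one_iff]
  refine exists_congr fun n => ⟨fun h => by simpa using congrArg Complex.im h, fun h => ?_⟩
  rw [h]
  push_cast
  ring

theorem eq_one_of_forall_exp_mul_I_eq_one_iff {α : ℝ} (hα : 0 < α)
    (h : ∀ t : ℝ, Complex.exp ((α * t : ℝ) * Complex.I) = 1 ↔ Complex.exp (t * Complex.I) = 1) :
    α = 1 := by
  simp only [Complex.exp_ofReal_mul_I_eq_one_iff] at h
  have hπ : 2 * Real.pi ≠ 0 := by positivity
  obtain ⟨m, hm⟩ := (h (2 * Real.pi)).2 ⟨1, by rw [Int.cast_one, one_mul]⟩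
  obtain ⟨k, hk⟩ := (h (2 * Real.pi / α)).1 ⟨1, by rw [Int.cast_one, one_mul]; field_simp⟩
  rw [mul_left_inj' hπ] at hm
  rw [div_eq_iff hα.ne'] at hk
  have hkm : k * m = 1 := by
    have : (k : ℝ) * α = 1 := mul_left_cancel₀ hπ (by linear_combination -hk)
    exact_mod_cast hm ▸ this
  rw [hm, Int.eq_one_of_mul_eq_one_left (by exact_mod_cast hm ▸ hα.le) hkm, Int.cast_one]

theorem convex_exp_preimage_annulus (a b : ℝ) : Convex ℝ (Complex.exp ⁻¹' annulus a b) := by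
  have hS : Complex.exp ⁻¹' annulus a b = Complex.re ⁻¹' (Real.exp ⁻¹' Ioo a b) := by
    ext u
    simp [annulus, Complex.norm_exp]
  rw [hS]
  exact (ordConnected_Ioo.preimage_mono Real.exp_monotone).convex.is_linear_preimage
    (.mk Complex.add_re Complex.smul_re)

theorem comp_exp_eq_of_norm_eq_rpow {a b α : ℝ} {f : ℂ → ℂ}
    (hf : DifferentiableOn ℂ f (annulus a b)) (hfα : ∀ z ∈ annulus a b, ‖f z‖ = ‖z‖ ^ α)
    {u₀ u : ℂ} (hu₀ : Complex.exp u₀ ∈ annulus a b) (hu : Complex.exp u ∈ annulus a b) :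
    f (Complex.exp u) = f (Complex.exp u₀) * Complex.exp (α * (u - u₀)) := by
  set S := Complex.exp ⁻¹' annulus a b
  set F : ℂ → ℂ := fun u => f (Complex.exp u) * Complex.exp (-(α * u))
  have hFd : DifferentiableOn ℂ F S :=
    (hf.comp Complex.differentiable_exp.differentiableOn fun u hu => hu).mul
      (by fun_prop : Differentiable ℂ fun u : ℂ => Complex.exp (-(α * u))).differentiableOn
  have hFnorm : ∀ u ∈ S, ‖F u‖ = 1 := by
    intro u hu
    rw [norm_mul, hfα _ hu, Complex.norm_exp, Complex.norm_exp, ← Real.exp_mul, ← Real.exp_add]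
    simp [mul_comm]
  have hFu : F u = F u₀ := Complex.eqOn_of_isPreconnected_of_isMaxOn_norm
    (convex_exp_preimage_annulus a b).isPreconnected
    ((isOpen_Ioo.preimage continuous_norm).preimage Complex.continuous_exp) hFd hu₀
    (isMaxOn_iff.2 fun v hv => by simp [hFnorm v hv, hFnorm u₀ hu₀]) hu
  calc f (Complex.exp u) = F u * Complex.exp (α * u) := by
        simp only [F, mul_assoc, ← Complex.exp_add, neg_add_cancel, Complex.exp_zero, mul_one]
    _ = f (Complex.exp u₀) * Complex.exp (α * (u - u₀)) := by
        simp only [hFu, F, mul_assoc, ← Complex.exp_add]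
        ring_nf

theorem eq_one_of_norm_eq_rpow {a b α : ℝ} {f : ℂ → ℂ} (ha : 0 ≤ a) (hab : a < b)
    (hf : DifferentiableOn ℂ f (annulus a b)) (hinj : InjOn f (annulus a b)) (hα : 0 < α)
    (hfα : ∀ z ∈ annulus a b, ‖f z‖ = ‖z‖ ^ α) : α = 1 := by
  have hz₀ := ofReal_midpoint_mem_annulus ha hab
  set u₀ := Complex.log (((a + b) / 2 : ℝ) : ℂ)
  have hu₀ : Complex.exp u₀ ∈ annulus a b := by
    rwa [Complex.exp_log (norm_pos_iff.1 (ha.trans_lt hz₀.1))]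
  have hc : f (Complex.exp u₀) ≠ 0 := by
    rw [← norm_pos_iff, hfα _ hu₀]
    exact Real.rpow_pos_of_pos (norm_pos_iff.2 (Complex.exp_ne_zero _)) α
  refine eq_one_of_forall_exp_mul_I_eq_one_iff hα fun t => ?_
  have hu₁ : Complex.exp (u₀ + t * Complex.I) ∈ annulus a b := by
    simpa [annulus, Complex.norm_exp] using hu₀
  have hf_eq : f (Complex.exp (u₀ + t * Complex.I)) = f (Complex.exp u₀) ↔
      Complex.exp ((α * t : ℝ) * Complex.I) = 1 := by
    rw [comp_exp_eq_of_norm_eq_rpow hf hfα hu₀ hu₁, mul_eq_left₀ hc]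
    push_cast
    ring_nf
  have hexp_eq : Complex.exp (u₀ + t * Complex.I) = Complex.exp u₀ ↔
      Complex.exp (t * Complex.I) = 1 := by
    rw [Complex.exp_add, mul_eq_left₀ (Complex.exp_ne_zero _)]
  rw [← hf_eq, ← hexp_eq]
  exact ⟨hinj hu₁ hu₀, congrArg f⟩

section Uniqueness

variable {f : ℂ → ℂ} {r s : ℝ}

theorem eq_of_tendsto_norm_inner_outer (hr0 : 0 < r) (hr1 : r < 1) (hs0 : 0 < s) (hs1 : s < 1)
    (hf : DifferentiableOn ℂ f (annulus r 1)) (hmf : MapsTo f (annulus r 1) (annulus s 1))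
    (hinj : InjOn f (annulus r 1)) (hin : Tendsto (‖f ·‖) (comap (‖·‖) (𝓝[>] r)) (𝓝 s))
    (hout : Tendsto (‖f ·‖) (comap (‖·‖) (𝓝[<] 1)) (𝓝 1)) : r = s := by
  have hα : r ^ Real.logb r s = s := Real.rpow_logb hr0 hr1.ne hs0
  have hα0 : 0 < Real.logb r s := Real.logb_pos_of_base_lt_one hr0 hr1 hs0 hs1
  have hα1 := eq_one_of_norm_eq_rpow hr0.le hr1 hf hinj hα0 fun z hz =>
    norm_eq_rpow_of_tendsto hr0 hr1 hs0 hf hmf hin hout hα hα0.le hz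
  rw [← hα, hα1, Real.rpow_one]

theorem eq_of_tendsto_norm_inner (hr0 : 0 < r) (hr1 : r < 1) (hs0 : 0 < s) (hs1 : s < 1)
    (hf : DifferentiableOn ℂ f (annulus r 1)) (hmf : MapsTo f (annulus r 1) (annulus s 1))
    (hinj : InjOn f (annulus r 1)) (hin : Tendsto (‖f ·‖) (comap (‖·‖) (𝓝[>] r)) (𝓝 s))
    (hout : Tendsto (‖f ·‖) (comap (‖·‖) (𝓝[<] 1)) (𝓝 s) ∨
      Tendsto (‖f ·‖) (comap (‖·‖) (𝓝[<] 1)) (𝓝 1)) : r = s := by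
  rcases hout with hout | hout
  · have hz := ofReal_midpoint_mem_annulus hr0.le hr1
    have hle := norm_le_max_of_tendsto hf hin hout hz
    rw [max_self] at hle
    exact absurd (hmf hz).1 hle.not_gt
  · exact eq_of_tendsto_norm_inner_outer hr0 hr1 hs0 hs1 hf hmf hinj hin hout

theorem eq_of_tendsto_norm_inner_one (hr0 : 0 < r) (hr1 : r < 1) (hs0 : 0 < s) (hs1 : s < 1)
    (hf : DifferentiableOn ℂ f (annulus r 1)) (hmf : MapsTo f (annulus r 1) (annulus s 1))
    (hinj : InjOn f (annulus r 1)) (hin : Tendsto (‖f ·‖) (comap (‖·‖) (𝓝[>] r)) (𝓝 1))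
    (hout : Tendsto (‖f ·‖) (comap (‖·‖) (𝓝[<] 1)) (𝓝 s) ∨
      Tendsto (‖f ·‖) (comap (‖·‖) (𝓝[<] 1)) (𝓝 1)) : r = s := by
  have hf0 : ∀ z ∈ annulus r 1, f z ≠ 0 := fun z hz => norm_pos_iff.1 (hs0.trans (hmf hz).1)
  have hnorm (z : ℂ) : ‖(s : ℂ) / f z‖ = s / ‖f z‖ := by
    rw [norm_div, Complex.norm_real, Real.norm_of_nonneg hs0.le]
  have hinv {l : Filter ℂ} {x : ℝ} (hx : x ≠ 0) (h : Tendsto (‖f ·‖) l (𝓝 x)) :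
      Tendsto (fun z => ‖(s : ℂ) / f z‖) l (𝓝 (s / x)) := by
    simp only [hnorm]
    exact tendsto_const_nhds.div h hx
  have hinv_one {l : Filter ℂ} (h : Tendsto (‖f ·‖) l (𝓝 1)) :
      Tendsto (fun z => ‖(s : ℂ) / f z‖) l (𝓝 s) := by
    simpa only [div_one] using hinv one_ne_zero h
  have hinv_s {l : Filter ℂ} (h : Tendsto (‖f ·‖) l (𝓝 s)) :
      Tendsto (fun z => ‖(s : ℂ) / f z‖) l (𝓝 1) := by
    simpa only [div_self hs0.ne'] using hinv hs0.ne' h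
  refine eq_of_tendsto_norm_inner (f := fun z => s / f z) hr0 hr1 hs0 hs1
    ((differentiableOn_const _).div hf hf0) ?_ ?_ (hinv_one hin) (hout.symm.imp hinv_one hinv_s)
  · intro z hz
    have hpos : 0 < ‖f z‖ := hs0.trans (hmf hz).1
    show s < ‖_‖ ∧ ‖_‖ < 1
    rw [hnorm]
    exact ⟨(lt_div_iff₀ hpos).2 (mul_lt_of_lt_one_right hs0 (hmf hz).2),
      (div_lt_one hpos).2 (hmf hz).1⟩
  · intro z hz w hw h
    exact hinj hz hw (by simpa [div_eq_mul_inv, hs0.ne'] using h)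

end Uniqueness

/-- Two standard annuli `A_{r,1}` and `A_{s,1}` with `0 < r, s < 1` are biholomorphic
if and only if `r = s`. -/
theorem stmt_13 (r s : ℝ) (hr0 : 0 < r) (hr1 : r < 1) (hs0 : 0 < s) (hs1 : s < 1) :
    (∃ f g : ℂ → ℂ,
      DifferentiableOn ℂ f {z : ℂ | r < ‖z‖ ∧ ‖z‖ < 1} ∧
      DifferentiableOn ℂ g {z : ℂ | s < ‖z‖ ∧ ‖z‖ < 1} ∧
      Set.MapsTo f {z : ℂ | r < ‖z‖ ∧ ‖z‖ < 1}
        {z : ℂ | s < ‖z‖ ∧ ‖z‖ < 1} ∧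
      Set.MapsTo g {z : ℂ | s < ‖z‖ ∧ ‖z‖ < 1}
        {z : ℂ | r < ‖z‖ ∧ ‖z‖ < 1} ∧
      (∀ z ∈ {z : ℂ | r < ‖z‖ ∧ ‖z‖ < 1}, g (f z) = z) ∧
      (∀ z ∈ {z : ℂ | s < ‖z‖ ∧ ‖z‖ < 1}, f (g z) = z)) ↔ r = s := by
  refine ⟨fun ⟨f, g, hf, hg, hmf, hmg, hgf, _⟩ => ?_, ?_⟩
  · have hinj : InjOn f (annulus r 1) := LeftInvOn.injOn hgf
    obtain ⟨hin, hout⟩ := tendsto_norm_inner_or_outer hr1 hf.continuousOn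
      (tendsto_norm_of_leftInvOn hr1 hg.continuousOn hmf hmg hgf)
    rcases hin with hin | hin
    · exact eq_of_tendsto_norm_inner hr0 hr1 hs0 hs1 hf hmf hinj hin hout
    · exact eq_of_tendsto_norm_inner_one hr0 hr1 hs0 hs1 hf hmf hinj hin hout
  · rintro rfl
    exact ⟨id, id, differentiableOn_id, differentiableOn_id, mapsTo_id _, mapsTo_id _,
      fun _ _ => rfl, fun _ _ => rfl⟩
end
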